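/- Let r0 : (0,π) → ℝ be any function with r0(φ) > 0 for φ ∈ (0,π). Then for any fixed φ ≠ ϕ in (0,π), the sequence n ∈ ℕ, n ≥ 1 ↦ H_n(φ,ϕ) is strictly decreasing. -/
import Mathlib


open Real Set

/-- The Gauss hypergeometric function `F(a,b;c;x) = Σₖ (a)ₖ(b)ₖ/((c)ₖ k!) xᵏ`. -/
noncomputable def hyp (a b c x : ℝ) : ℝ :=
  ∑' k : ℕ, ((ascPochhammer ℝ k).eval a * (ascPochhammer ℝ k).eval b /
    ((ascPochhammer ℝ k).eval c * (Nat.factorial k : ℝ))) * x ^ k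

/-- `R(φ,ϕ) = (r0(φ)+r0(ϕ))² + (cos φ − cos ϕ)²`. -/
noncomputable def Rker (r0 : ℝ → ℝ) (φ ϕ : ℝ) : ℝ :=
  (r0 φ + r0 ϕ) ^ 2 + (Real.cos φ - Real.cos ϕ) ^ 2

/-- `H_n(φ,ϕ) = (2^{2n−1}((1/2)ₙ)²/(2n)!) sin ϕ · r0(φ)^{n−1} r0(ϕ)^{n+1} R(φ,ϕ)^{−(n+1/2)}
· F(n+1/2,n+1/2;2n+1; 4 r0(φ) r0(ϕ)/R(φ,ϕ))`. -/
noncomputable def Hker (r0 : ℝ → ℝ) (n : ℕ) (φ ϕ : ℝ) : ℝ :=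
  (2:ℝ) ^ (2 * n - 1) * ((ascPochhammer ℝ n).eval (1 / 2 : ℝ)) ^ 2 / (Nat.factorial (2 * n) : ℝ) *
    (Real.sin ϕ * r0 φ ^ (n - 1) * r0 ϕ ^ (n + 1) / Rker r0 φ ϕ ^ ((n : ℝ) + 1 / 2)) *
    hyp ((n : ℝ) + 1 / 2) ((n : ℝ) + 1 / 2) (2 * (n : ℝ) + 1) (4 * r0 φ * r0 ϕ / Rker r0 φ ϕ)

/-- The general term of the hypergeometric series with `b = a`. -/
noncomputable def termg (a c x : ℝ) (k : ℕ) : ℝ :=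
  (ascPochhammer ℝ k).eval a * (ascPochhammer ℝ k).eval a /
    ((ascPochhammer ℝ k).eval c * (Nat.factorial k : ℝ)) * x ^ k

lemma hyp_eq (a c x : ℝ) : hyp a a c x = ∑' k, termg a c x k := rfl

lemma P_succ_left (k : ℕ) (y : ℝ) :
    (ascPochhammer ℝ (k+1)).eval y = y * (ascPochhammer ℝ k).eval (y+1) := by
  rw [ascPochhammer_succ_left]
  simp [Polynomial.eval_comp]

lemma P_shift (k : ℕ) (y : ℝ) :
    (ascPochhammer ℝ k).eval y * (y + k) = y * (ascPochhammer ℝ k).eval (y+1) := by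
  rw [← ascPochhammer_succ_eval, P_succ_left]

lemma termg_nonneg {a c x : ℝ} (hc : 0 < c) (hx : 0 ≤ x) (k : ℕ) : 0 ≤ termg a c x k := by
  have h1 := ascPochhammer_pos k c hc
  have h2 : (0:ℝ) < (Nat.factorial k : ℝ) := by exact_mod_cast k.factorial_pos
  exact mul_nonneg (div_nonneg (mul_self_nonneg _) (by positivity)) (pow_nonneg hx k)

lemma termg_zero (a c x : ℝ) : termg a c x 0 = 1 := by
  simp [termg]

lemma summable_termg {a c x : ℝ} (ha : 0 < a) (hc : 0 < c) (hac : 2*a ≤ c)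
    (hx0 : 0 ≤ x) (hx1 : x < 1) : Summable (termg a c x) := by
  apply summable_of_ratio_norm_eventually_le hx1
  filter_upwards [Filter.eventually_ge_atTop ⌈a*a⌉₊] with k hk
  have hk' : a*a ≤ (k:ℝ) := le_trans (Nat.le_ceil _) (by exact_mod_cast hk)
  have hknn : (0:ℝ) ≤ (k:ℝ) := Nat.cast_nonneg k
  have hC := ascPochhammer_pos k c hc
  have hfk : (0:ℝ) < (Nat.factorial k : ℝ) := by exact_mod_cast k.factorial_pos
  have hck : (0:ℝ) < c + k := by linarith
  have hk1 : (0:ℝ) < (k:ℝ) + 1 := by linarith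
  have hek : (a+k)*(a+k) ≤ (c+k)*((k:ℝ)+1) := by nlinarith
  have hrec : termg a c x (k+1) = termg a c x k * ((a+k)*(a+k)/((c+k)*((k:ℝ)+1)) * x) := by
    unfold termg
    rw [ascPochhammer_succ_eval, ascPochhammer_succ_eval, Nat.factorial_succ, pow_succ]
    push_cast
    field_simp
  rw [Real.norm_eq_abs, Real.norm_eq_abs, abs_of_nonneg (termg_nonneg hc hx0 _),
    abs_of_nonneg (termg_nonneg hc hx0 _), hrec]
  calc termg a c x k * ((a+k)*(a+k)/((c+k)*((k:ℝ)+1)) * x)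
      ≤ termg a c x k * (1 * x) := by
        apply mul_le_mul_of_nonneg_left _ (termg_nonneg hc hx0 k)
        apply mul_le_mul_of_nonneg_right _ hx0
        rw [div_le_one (by positivity)]
        exact hek
    _ = x * termg a c x k := by ring

lemma core (M : ℕ) {x : ℝ} (hx0 : 0 < x) (hx1 : x < 1) :
    (2*(M:ℝ)+1) * x * hyp ((M:ℝ)+3/2) ((M:ℝ)+3/2) (2*(M:ℝ)+3) x
      < 4*(2*(M:ℝ)+2) * hyp ((M:ℝ)+1/2) ((M:ℝ)+1/2) (2*(M:ℝ)+1) x := by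
  have hMnn : (0:ℝ) ≤ (M:ℝ) := Nat.cast_nonneg M
  have ha : (0:ℝ) < (M:ℝ)+1/2 := by linarith
  have hc : (0:ℝ) < 2*(M:ℝ)+1 := by linarith
  have ha' : (0:ℝ) < (M:ℝ)+3/2 := by linarith
  have hc' : (0:ℝ) < 2*(M:ℝ)+3 := by linarith
  have hs : Summable (termg ((M:ℝ)+1/2) (2*(M:ℝ)+1) x) :=
    summable_termg ha hc (le_of_eq (by ring)) hx0.le hx1
  have hs' : Summable (termg ((M:ℝ)+3/2) (2*(M:ℝ)+3) x) :=
    summable_termg ha' hc' (by linarith) hx0.le hx1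
  have key : ∀ k : ℕ, (2*(M:ℝ)+1) * x * termg ((M:ℝ)+3/2) (2*(M:ℝ)+3) x k
      ≤ 4*(2*(M:ℝ)+2) * termg ((M:ℝ)+1/2) (2*(M:ℝ)+1) x (k+1) := by
    intro k
    have hknn : (0:ℝ) ≤ (k:ℝ) := Nat.cast_nonneg k
    have hD : (0:ℝ) < (2*(M:ℝ)+2) + k := by linarith
    have hk1 : (0:ℝ) < (k:ℝ) + 1 := by linarith
    have e1 : (ascPochhammer ℝ (k+1)).eval ((M:ℝ)+1/2)
        = ((M:ℝ)+1/2) * (ascPochhammer ℝ k).eval ((M:ℝ)+3/2) := by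
      rw [P_succ_left, show ((M:ℝ)+1/2)+1 = (M:ℝ)+3/2 by ring]
    have e4 : (ascPochhammer ℝ (k+1)).eval (2*(M:ℝ)+1) * ((2*(M:ℝ)+2)+k)
        = (2*(M:ℝ)+1)*(2*(M:ℝ)+2)*(ascPochhammer ℝ k).eval (2*(M:ℝ)+3) := by
      rw [P_succ_left, show (2*(M:ℝ)+1)+1 = 2*(M:ℝ)+2 by ring, mul_assoc,
        show (ascPochhammer ℝ k).eval (2*(M:ℝ)+2) * ((2*(M:ℝ)+2)+k)
          = (2*(M:ℝ)+2) * (ascPochhammer ℝ k).eval (2*(M:ℝ)+3) by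
            rw [P_shift k (2*(M:ℝ)+2), show 2*(M:ℝ)+2+1 = 2*(M:ℝ)+3 by ring]]
      ring
    have e4' : (ascPochhammer ℝ (k+1)).eval (2*(M:ℝ)+1)
        = (2*(M:ℝ)+1)*(2*(M:ℝ)+2)*(ascPochhammer ℝ k).eval (2*(M:ℝ)+3) / ((2*(M:ℝ)+2)+k) :=
      (eq_div_iff hD.ne').mpr e4
    have hC' := ascPochhammer_pos k (2*(M:ℝ)+3) hc'
    have hfk : (0:ℝ) < (Nat.factorial k : ℝ) := by exact_mod_cast k.factorial_pos
    have hL0 : 0 ≤ (2*(M:ℝ)+1) * x * termg ((M:ℝ)+3/2) (2*(M:ℝ)+3) x k :=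
      mul_nonneg (mul_nonneg (by linarith) hx0.le) (termg_nonneg hc' hx0.le k)
    have hratio : (1:ℝ) ≤ ((2*(M:ℝ)+2)+k)/((k:ℝ)+1) := by
      rw [le_div_iff₀ hk1]; linarith
    have heq : 4*(2*(M:ℝ)+2) * termg ((M:ℝ)+1/2) (2*(M:ℝ)+1) x (k+1)
        = (2*(M:ℝ)+1) * x * termg ((M:ℝ)+3/2) (2*(M:ℝ)+3) x k * (((2*(M:ℝ)+2)+k)/((k:ℝ)+1)) := by
      unfold termg
      rw [e1, e4', Nat.factorial_succ, pow_succ]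
      push_cast
      field_simp
      ring
    calc (2*(M:ℝ)+1) * x * termg ((M:ℝ)+3/2) (2*(M:ℝ)+3) x k
        = (2*(M:ℝ)+1) * x * termg ((M:ℝ)+3/2) (2*(M:ℝ)+3) x k * 1 := (mul_one _).symm
      _ ≤ (2*(M:ℝ)+1) * x * termg ((M:ℝ)+3/2) (2*(M:ℝ)+3) x k * (((2*(M:ℝ)+2)+k)/((k:ℝ)+1)) :=
          mul_le_mul_of_nonneg_left hratio hL0
      _ = _ := heq.symm
  rw [hyp_eq, hyp_eq, ← tsum_mul_left, ← tsum_mul_left]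
  have hg : Summable (fun k => 4*(2*(M:ℝ)+2) * termg ((M:ℝ)+1/2) (2*(M:ℝ)+1) x k) :=
    hs.mul_left _
  have hg1 : Summable (fun k => 4*(2*(M:ℝ)+2) * termg ((M:ℝ)+1/2) (2*(M:ℝ)+1) x (k+1)) :=
    (summable_nat_add_iff 1).mpr hg
  calc ∑' k, (2*(M:ℝ)+1) * x * termg ((M:ℝ)+3/2) (2*(M:ℝ)+3) x k
      ≤ ∑' k, 4*(2*(M:ℝ)+2) * termg ((M:ℝ)+1/2) (2*(M:ℝ)+1) x (k+1) :=
        Summable.tsum_le_tsum key (hs'.mul_left _) hg1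
    _ < ∑' k, 4*(2*(M:ℝ)+2) * termg ((M:ℝ)+1/2) (2*(M:ℝ)+1) x k := by
        rw [Summable.tsum_eq_zero_add hg]
        have h0 : 0 < 4*(2*(M:ℝ)+2) * termg ((M:ℝ)+1/2) (2*(M:ℝ)+1) x 0 := by
          rw [termg_zero]; nlinarith
        linarith

/-- Let `r0 : (0,π) → ℝ` be positive on `(0,π)`. Then for any fixed `φ ≠ ϕ` in `(0,π)`,
the sequence `n ≥ 1 ↦ H_n(φ,ϕ)` is strictly decreasing. -/
theorem stmt7 (r0 : ℝ → ℝ) (hr0 : ∀ φ ∈ Set.Ioo (0:ℝ) π, 0 < r0 φ)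
    (φ ϕ : ℝ) (hφ : φ ∈ Set.Ioo (0:ℝ) π) (hϕ : ϕ ∈ Set.Ioo (0:ℝ) π) (hne : φ ≠ ϕ) :
    StrictAntiOn (fun n : ℕ => Hker r0 n φ ϕ) (Set.Ici 1) := by
  obtain ⟨hφ1, hφ2⟩ := hφ
  obtain ⟨hϕ1, hϕ2⟩ := hϕ
  have hr : 0 < r0 φ := hr0 φ ⟨hφ1, hφ2⟩
  have hρ : 0 < r0 ϕ := hr0 ϕ ⟨hϕ1, hϕ2⟩
  have hsin : 0 < Real.sin ϕ := Real.sin_pos_of_pos_of_lt_pi hϕ1 hϕ2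
  have hcos : Real.cos φ ≠ Real.cos ϕ := fun h =>
    hne (Real.injOn_cos ⟨hφ1.le, hφ2.le⟩ ⟨hϕ1.le, hϕ2.le⟩ h)
  have hcsq : 0 < (Real.cos φ - Real.cos ϕ)^2 :=
    lt_of_le_of_ne (sq_nonneg _) (Ne.symm (pow_ne_zero 2 (sub_ne_zero.mpr hcos)))
  have hR : 0 < Rker r0 φ ϕ := by
    unfold Rker; nlinarith [sq_nonneg (r0 φ + r0 ϕ)]
  have hx0 : 0 < 4 * r0 φ * r0 ϕ / Rker r0 φ ϕ :=
    div_pos (by nlinarith) hR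
  have hx1 : 4 * r0 φ * r0 ϕ / Rker r0 φ ϕ < 1 := by
    rw [div_lt_one hR]
    unfold Rker
    nlinarith [sq_nonneg (r0 φ - r0 ϕ)]
  have key : ∀ n, 1 ≤ n → Hker r0 (n+1) φ ϕ < Hker r0 n φ ϕ := by
    intro n hn
    obtain ⟨m, rfl⟩ : ∃ m, n = m + 1 := ⟨n - 1, by omega⟩
    have hC := core (m+1) hx0 hx1
    have hfac : (0:ℝ) < ((2*(m+1)).factorial : ℝ) := by exact_mod_cast (2*(m+1)).factorial_pos
    have hP1 : 0 < (ascPochhammer ℝ (m+1)).eval (1/2 : ℝ) :=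
      ascPochhammer_pos _ _ (by norm_num)
    have hRp : 0 < Rker r0 φ ϕ ^ (((m+1 : ℕ):ℝ) + 1/2) := Real.rpow_pos_of_pos hR _
    set E : ℝ := (2:ℝ)^(2*m+1) * ((ascPochhammer ℝ (m+1)).eval (1/2:ℝ))^2 /
        ((2*(m+1)).factorial : ℝ) *
        (Real.sin ϕ * r0 φ ^ m * r0 ϕ ^ (m+2) / Rker r0 φ ϕ ^ (((m+1 : ℕ):ℝ) + 1/2)) /
        (4*(2*((m+1 : ℕ):ℝ)+2)) with hEdef
    have hE : 0 < E := by
      rw [hEdef]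
      have h1 : (0:ℝ) < (2:ℝ)^(2*m+1) := by positivity
      have h2 : (0:ℝ) < 4*(2*((m+1 : ℕ):ℝ)+2) := by positivity
      exact div_pos (mul_pos (div_pos (mul_pos h1 (pow_pos hP1 2)) hfac)
        (div_pos (mul_pos (mul_pos hsin (pow_pos hr m)) (pow_pos hρ (m+2))) hRp)) h2
    have eqn : Hker r0 (m+1) φ ϕ = E * (4*(2*((m+1 : ℕ):ℝ)+2) *
        hyp (((m+1 : ℕ):ℝ) + 1/2) (((m+1 : ℕ):ℝ) + 1/2) (2*((m+1 : ℕ):ℝ)+1)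
          (4 * r0 φ * r0 ϕ / Rker r0 φ ϕ)) := by
      rw [hEdef]
      simp only [Hker]
      rw [show 2*(m+1)-1 = 2*m+1 by omega, show (m+1)-1 = m by omega]
      field_simp
    have eqs : Hker r0 (m+2) φ ϕ = E * ((2*((m+1 : ℕ):ℝ)+1) * (4 * r0 φ * r0 ϕ / Rker r0 φ ϕ) *
        hyp (((m+1 : ℕ):ℝ) + 3/2) (((m+1 : ℕ):ℝ) + 3/2) (2*((m+1 : ℕ):ℝ)+3)
          (4 * r0 φ * r0 ϕ / Rker r0 φ ϕ)) := by
      rw [hEdef]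
      simp only [Hker]
      rw [show 2*(m+2)-1 = 2*m+3 by omega, show (m+2)-1 = m+1 by omega]
      rw [show Rker r0 φ ϕ ^ (((m+2 : ℕ):ℝ) + 1/2)
          = Rker r0 φ ϕ ^ (((m+1 : ℕ):ℝ) + 1/2) * Rker r0 φ ϕ by
        rw [show ((m+2 : ℕ):ℝ) + 1/2 = (((m+1 : ℕ):ℝ) + 1/2) + 1 by push_cast; ring,
          Real.rpow_add hR, Real.rpow_one]]
      rw [show ((m+2 : ℕ):ℝ) + 1/2 = ((m+1 : ℕ):ℝ) + 3/2 by push_cast; ring,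
        show 2*((m+2 : ℕ):ℝ) + 1 = 2*((m+1 : ℕ):ℝ) + 3 by push_cast; ring]
      rw [show (ascPochhammer ℝ (m+2)).eval (1/2:ℝ)
          = (ascPochhammer ℝ (m+1)).eval (1/2:ℝ) * ((1/2:ℝ) + ((m+1 : ℕ):ℝ)) from
        ascPochhammer_succ_eval (m+1) (1/2:ℝ)]
      rw [show ((2*(m+2)).factorial : ℝ)
          = (2*(m:ℝ)+4)*(2*(m:ℝ)+3)*((2*(m+1)).factorial : ℝ) by
        rw [show 2*(m+2) = 2*(m+1)+1+1 by omega, Nat.factorial_succ, Nat.factorial_succ]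
        push_cast; ring]
      rw [show (2:ℝ)^(2*m+3) = 4*(2:ℝ)^(2*m+1) by
        rw [show 2*m+3 = (2*m+1)+2 by omega, pow_add]; ring]
      push_cast
      field_simp
      ring
    show Hker r0 (m+1+1) φ ϕ < Hker r0 (m+1) φ ϕ
    rw [show m+1+1 = m+2 from rfl, eqs, eqn]
    exact mul_lt_mul_of_pos_left hC hE
  intro p hp q hq hpq
  simp only
  have main : ∀ q, p + 1 ≤ q → Hker r0 q φ ϕ < Hker r0 p φ ϕ := by
    intro q hq'
    induction q, hq' using Nat.le_induction with
    | base => exact key p hp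
    | succ n hn ih => exact (key n (le_trans hp (by omega))).trans ih
  exact main q hpq
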